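/- Let d ≥ 5 be an integer and let G, H ∈ ℂ[t₀,t₁] be homogeneous of degree d−1, with coefficients G_{i,j} and H_{i,j}. Set A = t₀²t₁²·V_{d−4} + ℂ·t₀^{d−1}t₁. Then A + span_ℂ{t₀G, t₁G, t₀H, t₁H} = V_d if and only if the 4×3 complex matrix with rows (G_{d−1,0}, G_{0,d−1}, 0), (0, G_{1,d−2}, G_{0,d−1}), (H_{d−1,0}, H_{0,d−1}, 0), (0, H_{1,d−2}, H_{0,d−1}) has rank 3. -/

import Mathlib

open MvPolynomial

noncomputable section

/-- `V n` is the space of homogeneous polynomials of degree `n` in `ℂ[t₀,t₁]`. -/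
abbrev V (n : ℕ) : Submodule ℂ (MvPolynomial (Fin 2) ℂ) :=
  MvPolynomial.homogeneousSubmodule (Fin 2) ℂ n

/-- `coeff2 i j F` is the coefficient of the monomial `t₀^i t₁^j` in `F`. -/
def coeff2 (i j : ℕ) (F : MvPolynomial (Fin 2) ℂ) : ℂ :=
  MvPolynomial.coeff (Finsupp.single 0 i + Finsupp.single 1 j) F

namespace Stmt11Aux
abbrev e2 (a b : ℕ) : Fin 2 →₀ ℕ := Finsupp.single 0 a + Finsupp.single 1 b

@[simp] lemma e2_app0 (a b : ℕ) : e2 a b 0 = a := by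
  simp [e2, Finsupp.single_apply]

@[simp] lemma e2_app1 (a b : ℕ) : e2 a b 1 = b := by
  simp [e2, Finsupp.single_apply]

lemma e2_ext (m : Fin 2 →₀ ℕ) : e2 (m 0) (m 1) = m := by
  ext a; fin_cases a <;> simp

lemma e2_le {a b i j : ℕ} : e2 a b ≤ e2 i j ↔ a ≤ i ∧ b ≤ j := by
  rw [Finsupp.le_def]
  constructor
  · intro h; exact ⟨by simpa using h 0, by simpa using h 1⟩
  · rintro ⟨h1, h2⟩ x; fin_cases x <;> simpa

lemma e2_sub (a b i j : ℕ) : e2 i j - e2 a b = e2 (i - a) (j - b) := by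
  ext x
  rw [Finsupp.tsub_apply]
  fin_cases x <;> simp

lemma e2_inj {a b i j : ℕ} : e2 a b = e2 i j ↔ a = i ∧ b = j := by
  constructor
  · intro h
    exact ⟨by rw [← e2_app0 a b, h, e2_app0], by rw [← e2_app1 a b, h, e2_app1]⟩
  · rintro ⟨rfl, rfl⟩; rfl

lemma e2_add (a b c d : ℕ) : e2 a b + e2 c d = e2 (a + c) (b + d) := by
  ext x; fin_cases x <;> simp

lemma e2_weight (a b : ℕ) : Finsupp.weight 1 (e2 a b) = a + b := by
  have h : Finsupp.weight (1 : Fin 2 → ℕ) (e2 a b) = Finsupp.degree (e2 a b) :=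
    (DFunLike.congr_fun Finsupp.degree_eq_weight_one (e2 a b)).symm
  rw [h, Finsupp.degree_apply]
  rw [Finset.sum_subset (Finset.subset_univ _)
    (fun x _ hx => Finsupp.notMem_support_iff.mp hx), Fin.sum_univ_two, e2_app0, e2_app1]

lemma e2_degree (a b : ℕ) : Finsupp.degree (e2 a b) = a + b := by
  have := e2_weight a b
  exact (DFunLike.congr_fun Finsupp.degree_eq_weight_one (e2 a b)).trans this

lemma weight2 (m : Fin 2 →₀ ℕ) : Finsupp.weight 1 m = m 0 + m 1 := by
  conv_lhs => rw [← e2_ext m]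
  rw [e2_weight]

lemma XX (a b : ℕ) : (X 0 : MvPolynomial (Fin 2) ℂ) ^ a * X 1 ^ b = monomial (e2 a b) 1 := by
  rw [X_pow_eq_monomial, X_pow_eq_monomial, monomial_mul, one_mul]

lemma X0_eq : (X 0 : MvPolynomial (Fin 2) ℂ) = monomial (e2 1 0) 1 := by
  have := XX 1 0
  simpa using this

lemma X1_eq : (X 1 : MvPolynomial (Fin 2) ℂ) = monomial (e2 0 1) 1 := by
  have := XX 0 1
  simpa using this

lemma coeff2' (i j : ℕ) (p : MvPolynomial (Fin 2) ℂ) : coeff (e2 i j) p = coeff (e2 i j) p := rfl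

lemma coeff2_mul (a b i j : ℕ) (p : MvPolynomial (Fin 2) ℂ) :
    coeff (e2 i j) ((monomial (e2 a b) (1 : ℂ)) * p)
      = if a ≤ i ∧ b ≤ j then coeff (e2 (i - a) (j - b)) p else 0 := by
  rw [coeff_monomial_mul']
  by_cases h : a ≤ i ∧ b ≤ j
  · rw [if_pos (e2_le.mpr h), if_pos h, one_mul, e2_sub]
  · rw [if_neg (fun hle => h (e2_le.mp hle)), if_neg h]

lemma coeff2_monomial (a b i j : ℕ) (c : ℂ) :
    coeff (e2 i j) (monomial (e2 a b) c) = if a = i ∧ b = j then c else 0 := by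
  rw [coeff_monomial]
  by_cases h : a = i ∧ b = j
  · rw [if_pos (e2_inj.mpr h), if_pos h]
  · rw [if_neg (fun he => h (e2_inj.mp he)), if_neg h]


def phi (d : ℕ) : MvPolynomial (Fin 2) ℂ →ₗ[ℂ] (Fin 3 → ℂ) where
  toFun p := ![coeff (e2 d 0) p, coeff (e2 1 (d - 1)) p, coeff (e2 0 d) p]
  map_add' p q := by funext k; fin_cases k <;> simp [coeff_add]
  map_smul' c p := by funext k; fin_cases k <;> simp

@[simp] lemma phi_apply (d : ℕ) (p : MvPolynomial (Fin 2) ℂ) :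
    phi d p = ![coeff (e2 d 0) p, coeff (e2 1 (d - 1)) p, coeff (e2 0 d) p] := rfl

lemma phi_mul22 (d : ℕ) (q : MvPolynomial (Fin 2) ℂ) :
    phi d ((X 0 : MvPolynomial (Fin 2) ℂ) ^ 2 * X 1 ^ 2 * q) = 0 := by
  funext k
  rw [phi_apply, XX]
  fin_cases k <;> simp [coeff2_mul]

lemma phi_mon (d : ℕ) (hd : 5 ≤ d) :
    phi d ((X 0 : MvPolynomial (Fin 2) ℂ) ^ (d - 1) * X 1) = 0 := by
  funext k
  rw [phi_apply, show (X 1 : MvPolynomial (Fin 2) ℂ) = X 1 ^ 1 from (pow_one _).symm, XX]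
  fin_cases k <;> simp [coeff2_monomial, e2_inj] <;> omega

lemma phi_X0 (d : ℕ) (hd : 5 ≤ d) (G : MvPolynomial (Fin 2) ℂ) :
    phi d (X 0 * G) = ![coeff (e2 (d - 1) 0) G, coeff (e2 0 (d - 1)) G, 0] := by
  funext k
  rw [phi_apply, X0_eq]
  fin_cases k <;>
    simp [coeff2_mul, show 1 ≤ d from by omega]

lemma phi_X1 (d : ℕ) (hd : 5 ≤ d) (G : MvPolynomial (Fin 2) ℂ) :
    phi d (X 1 * G) = ![0, coeff (e2 1 (d - 2)) G, coeff (e2 0 (d - 1)) G] := by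
  funext k
  rw [phi_apply, X1_eq]
  fin_cases k <;>
    simp [coeff2_mul, show 1 ≤ d from by omega, show 1 ≤ d - 1 from by omega,
      show d - 1 - 1 = d - 2 from by omega]

lemma phi_b0 (d : ℕ) (hd : 5 ≤ d) :
    phi d (monomial (e2 d 0) (1 : ℂ)) = ![1, 0, 0] := by
  funext k
  rw [phi_apply]
  fin_cases k <;> simp [coeff2_monomial, e2_inj] <;> omega

lemma phi_b1 (d : ℕ) (hd : 5 ≤ d) :
    phi d (monomial (e2 1 (d - 1)) (1 : ℂ)) = ![0, 1, 0] := by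
  funext k
  rw [phi_apply]
  fin_cases k <;> simp [coeff2_monomial, e2_inj] <;> omega

lemma phi_b2 (d : ℕ) (hd : 5 ≤ d) :
    phi d (monomial (e2 0 d) (1 : ℂ)) = ![0, 0, 1] := by
  funext k
  rw [phi_apply]
  fin_cases k <;> simp [coeff2_monomial, e2_inj] <;> omega

end Stmt11Aux

open Stmt11Aux

/-- Criterion of Case 1-1 of Proposition 4.1: with
`A = t₀²t₁²·V_{d-4} + ℂ·t₀^{d-1}t₁`, we have `A + <t₀G, t₁G, t₀H, t₁H> = V_d`
iff the matrix `M_Y` has rank 3. -/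
theorem statement11 (d : ℕ) (hd : 5 ≤ d)
    (G H : MvPolynomial (Fin 2) ℂ)
    (hG : G ∈ V (d - 1)) (hH : H ∈ V (d - 1))
    (A : Submodule ℂ (MvPolynomial (Fin 2) ℂ))
    (hA : A = (V (d - 4)).map
        (LinearMap.mulLeft ℂ ((X 0 : MvPolynomial (Fin 2) ℂ) ^ 2 * X 1 ^ 2)) ⊔
      Submodule.span ℂ {(X 0 : MvPolynomial (Fin 2) ℂ) ^ (d - 1) * X 1}) :
    (A ⊔ Submodule.span ℂ {X 0 * G, X 1 * G, X 0 * H, X 1 * H} = V d)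
      ↔ Matrix.rank
          !![coeff2 (d - 1) 0 G, coeff2 0 (d - 1) G, 0;
             0, coeff2 1 (d - 2) G, coeff2 0 (d - 1) G;
             coeff2 (d - 1) 0 H, coeff2 0 (d - 1) H, 0;
             0, coeff2 1 (d - 2) H, coeff2 0 (d - 1) H] = 3 := by
  classical
  open Stmt11Aux in
  set S : Submodule ℂ (MvPolynomial (Fin 2) ℂ) :=
    Submodule.span ℂ {X 0 * G, X 1 * G, X 0 * H, X 1 * H} with hS
  set M : Matrix (Fin 4) (Fin 3) ℂ :=
    !![coeff2 (d - 1) 0 G, coeff2 0 (d - 1) G, 0;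
       0, coeff2 1 (d - 2) G, coeff2 0 (d - 1) G;
       coeff2 (d - 1) 0 H, coeff2 0 (d - 1) H, 0;
       0, coeff2 1 (d - 2) H, coeff2 0 (d - 1) H] with hM
  have hGh : MvPolynomial.IsHomogeneous G (d - 1) :=
    (mem_homogeneousSubmodule _ _).mp hG
  have hHh : MvPolynomial.IsHomogeneous H (d - 1) :=
    (mem_homogeneousSubmodule _ _).mp hH
  have hd1 : 1 + (d - 1) = d := by omega
  -- the generators are homogeneous of degree d
  have hgen : ∀ P : MvPolynomial (Fin 2) ℂ, MvPolynomial.IsHomogeneous P (d - 1) →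
      (X 0 * P ∈ V d ∧ X 1 * P ∈ V d) := by
    intro P hP
    refine ⟨?_, ?_⟩
    · rw [mem_homogeneousSubmodule]
      have := (isHomogeneous_X ℂ 0).mul hP
      rwa [hd1] at this
    · rw [mem_homogeneousSubmodule]
      have := (isHomogeneous_X ℂ 1).mul hP
      rwa [hd1] at this
  have hSV : S ≤ V d := by
    rw [hS]
    apply Submodule.span_le.mpr
    intro x hx
    simp only [Set.mem_insert_iff, Set.mem_singleton_iff] at hx
    rcases hx with rfl | rfl | rfl | rfl
    exacts [(hgen G hGh).1, (hgen G hGh).2, (hgen H hHh).1, (hgen H hHh).2]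
  have hAV : A ≤ V d := by
    rw [hA]
    apply sup_le
    · intro x hx
      obtain ⟨q, hq, rfl⟩ := Submodule.mem_map.mp hx
      rw [LinearMap.mulLeft_apply, mem_homogeneousSubmodule]
      have h22 : MvPolynomial.IsHomogeneous ((X 0 : MvPolynomial (Fin 2) ℂ) ^ 2 * X 1 ^ 2) 4 := by
        rw [XX]
        exact isHomogeneous_monomial _ (by rw [e2_degree])
      have := h22.mul ((mem_homogeneousSubmodule _ _).mp hq)
      rwa [show 4 + (d - 4) = d from by omega] at this
    · apply Submodule.span_le.mpr
      intro x hx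
      simp only [Set.mem_singleton_iff] at hx
      subst hx
      rw [SetLike.mem_coe, mem_homogeneousSubmodule,
        show (X 1 : MvPolynomial (Fin 2) ℂ) = X 1 ^ 1 from (pow_one _).symm, XX]
      exact isHomogeneous_monomial _ (by rw [e2_degree]; omega)
  -- phi vanishes on A
  have hphiA : ∀ x ∈ A, phi d x = 0 := by
    intro x hx
    rw [hA] at hx
    obtain ⟨y, hy, z, hz, rfl⟩ := Submodule.mem_sup.mp hx
    obtain ⟨q, hq, rfl⟩ := Submodule.mem_map.mp hy
    obtain ⟨c, rfl⟩ := Submodule.mem_span_singleton.mp hz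
    rw [map_add, map_smul, LinearMap.mulLeft_apply, phi_mul22, phi_mon d hd]
    simp
  -- kernel of phi inside V d is A
  have hkerA : ∀ p, p ∈ V d → phi d p = 0 → p ∈ A := by
    intro p hp hphi
    have hhom : MvPolynomial.IsHomogeneous p d := (mem_homogeneousSubmodule _ _).mp hp
    rw [p.as_sum]
    refine Submodule.sum_mem _ (fun m hm => ?_)
    have hco : coeff m p ≠ 0 := mem_support_iff.mp hm
    have hw := hhom hco
    rw [weight2] at hw
    have h0 : coeff (e2 d 0) p = 0 := by
      have := congrFun hphi 0; simpa [phi_apply] using this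
    have h1 : coeff (e2 1 (d - 1)) p = 0 := by
      have := congrFun hphi 1; simpa [phi_apply] using this
    have h2 : coeff (e2 0 d) p = 0 := by
      have := congrFun hphi 2; simpa [phi_apply] using this
    have hme : m = e2 (m 0) (m 1) := (e2_ext m).symm
    set a := m 0 with ha
    set b := m 1 with hb
    have hne0 : ¬(a = d) := fun h => hco (by rw [hme, h, show b = 0 from by omega]; exact h0)
    have hne1 : ¬(a = 1) := fun h =>
      hco (by rw [hme, h, show b = d - 1 from by omega]; exact h1)
    have hne2 : ¬(a = 0) := fun h => hco (by rw [hme, h, show b = d from by omega]; exact h2)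
    rw [hA]
    by_cases hcase : a = d - 1
    · apply Submodule.mem_sup_right
      have heq : monomial m (coeff m p)
          = coeff m p • ((X 0 : MvPolynomial (Fin 2) ℂ) ^ (d - 1) * X 1) := by
        rw [show (X 1 : MvPolynomial (Fin 2) ℂ) = X 1 ^ 1 from (pow_one _).symm, XX,
          smul_monomial, smul_eq_mul, mul_one, hme, hcase, show b = 1 from by omega]
      rw [heq]
      exact Submodule.smul_mem _ _ (Submodule.mem_span_singleton_self _)
    · apply Submodule.mem_sup_left
      refine Submodule.mem_map.mpr ⟨monomial (e2 (a - 2) (b - 2)) (coeff m p), ?_, ?_⟩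
      · rw [mem_homogeneousSubmodule]
        exact isHomogeneous_monomial _ (by rw [e2_degree]; omega)
      · rw [LinearMap.mulLeft_apply, XX, monomial_mul, one_mul, e2_add,
          show 2 + (a - 2) = a from by omega, show 2 + (b - 2) = b from by omega, ← hme]
  -- surjectivity of phi from V d
  have hsurj : ∀ v : Fin 3 → ℂ, ∃ q, q ∈ V d ∧ phi d q = v := by
    intro v
    refine ⟨v 0 • monomial (e2 d 0) 1 + v 1 • monomial (e2 1 (d - 1)) 1
      + v 2 • monomial (e2 0 d) 1, ?_, ?_⟩
    · refine Submodule.add_mem _ (Submodule.add_mem _ ?_ ?_) ?_ <;>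
        refine Submodule.smul_mem _ _ ?_ <;>
        · rw [mem_homogeneousSubmodule]
          exact isHomogeneous_monomial _ (by rw [e2_degree]; omega)
    · rw [map_add, map_add, map_smul, map_smul, map_smul,
        phi_b0 d hd, phi_b1 d hd, phi_b2 d hd]
      funext k; fin_cases k <;> simp
  -- rows of M
  have h0 : M 0 = phi d (X 0 * G) := by
    rw [phi_X0 d hd]; funext k; fin_cases k <;> simp [hM, coeff2, e2]
  have h1 : M 1 = phi d (X 1 * G) := by
    rw [phi_X1 d hd]; funext k; fin_cases k <;> simp [hM, coeff2, e2]
  have h2 : M 2 = phi d (X 0 * H) := by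
    rw [phi_X0 d hd]; funext k; fin_cases k <;> simp [hM, coeff2, e2]
  have h3 : M 3 = phi d (X 1 * H) := by
    rw [phi_X1 d hd]; funext k; fin_cases k <;> simp [hM, coeff2, e2]
  have hrange : Set.range M = {phi d (X 0 * G), phi d (X 1 * G), phi d (X 0 * H), phi d (X 1 * H)} := by
    ext v
    constructor
    · rintro ⟨i, rfl⟩
      fin_cases i <;> simp [h0, h1, h2, h3]
    · intro hv
      simp only [Set.mem_insert_iff, Set.mem_singleton_iff] at hv
      rcases hv with rfl | rfl | rfl | rfl
      exacts [⟨0, h0⟩, ⟨1, h1⟩, ⟨2, h2⟩, ⟨3, h3⟩]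
  have hmapS : S.map (phi d) = Submodule.span ℂ
      ({phi d (X 0 * G), phi d (X 1 * G), phi d (X 0 * H), phi d (X 1 * H)} : Set (Fin 3 → ℂ)) := by
    rw [hS, Submodule.map_span]
    congr 1
    simp only [Set.image_insert_eq, Set.image_singleton]
  have hrank : M.rank = Module.finrank ℂ (Submodule.span ℂ
      ({phi d (X 0 * G), phi d (X 1 * G), phi d (X 0 * H), phi d (X 1 * H)} : Set (Fin 3 → ℂ))) := by
    rw [Matrix.rank_eq_finrank_span_row, ← hrange]; rfl
  have hdim : (Submodule.span ℂ
      ({phi d (X 0 * G), phi d (X 1 * G), phi d (X 0 * H), phi d (X 1 * H)} : Set (Fin 3 → ℂ)) = ⊤)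
      ↔ M.rank = 3 := by
    rw [hrank]
    constructor
    · intro h
      rw [h, finrank_top]
      simp [Module.finrank_pi]
    · intro h
      apply Submodule.eq_top_of_finrank_eq
      rw [h]
      simp [Module.finrank_pi]
  rw [← hdim]
  constructor
  · intro hEq
    rw [eq_top_iff]
    rintro v -
    obtain ⟨q, hqV, hq⟩ := hsurj v
    rw [← hEq] at hqV
    obtain ⟨x, hx, s, hs, rfl⟩ := Submodule.mem_sup.mp hqV
    rw [map_add, hphiA x hx, zero_add] at hq
    rw [← hq, ← hmapS]
    exact Submodule.mem_map_of_mem hs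
  · intro htop
    apply le_antisymm (sup_le hAV hSV)
    intro p hp
    have hmem : phi d p ∈ S.map (phi d) := by
      rw [hmapS, htop]; trivial
    obtain ⟨s, hsS, hse⟩ := Submodule.mem_map.mp hmem
    have hps : p - s ∈ A := by
      refine hkerA _ (Submodule.sub_mem _ hp (hSV hsS)) ?_
      rw [map_sub, hse, sub_self]
    have hmem2 : (p - s) + s ∈ A ⊔ S :=
      Submodule.add_mem _ (Submodule.mem_sup_left hps) (Submodule.mem_sup_right hsS)
    simpa using hmem2
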